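/- Let ν > 0 and z > 0 be real numbers. Then the function t ↦ J_ν(t)²/t is integrable on (0, z) and ∫_0^z J_ν(t)²/t dt = (z/2)^{2ν} / (2ν · Γ(ν+1)²) · ₂F₃(ν, ν+1/2; ν+1, ν+1, 2ν+1; −z²). -/

import Mathlib

open Real MeasureTheory Filter

/-- Pochhammer symbol `(a)_k = a (a+1) ⋯ (a+k-1)`. -/
noncomputable def poch (a : ℝ) (k : ℕ) : ℝ := ∏ i ∈ Finset.range k, (a + i)

/-- Generalized hypergeometric function `ₚF_q(a; b; x)`. -/
noncomputable def genHyp (a b : List ℝ) (x : ℝ) : ℝ :=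
  ∑' k : ℕ, ((a.map (fun c => poch c k)).prod / (b.map (fun c => poch c k)).prod)
    * x ^ k / (Nat.factorial k : ℝ)

/-- Bessel function of the first kind `J_ν(x)`. -/
noncomputable def besselJ (ν x : ℝ) : ℝ :=
  (x / 2) ^ ν * ∑' k : ℕ, (-1 : ℝ) ^ k * (x / 2) ^ (2 * k) /
    ((Nat.factorial k : ℝ) * Real.Gamma (ν + k + 1))

/-- Modified Bessel function of the first kind `I_ν(x)`. -/
noncomputable def besselI (ν x : ℝ) : ℝ :=
  (x / 2) ^ ν * ∑' k : ℕ, (x / 2) ^ (2 * k) /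
    ((Nat.factorial k : ℝ) * Real.Gamma (ν + k + 1))

/-- Bessel function of the second kind `Y_ν(x)` (non-integer order). -/
noncomputable def besselY (ν x : ℝ) : ℝ :=
  (besselJ ν x * Real.cos (π * ν) - besselJ (-ν) x) / Real.sin (π * ν)

/-- Macdonald function `K_ν(x)` (non-integer order). -/
noncomputable def besselK (ν x : ℝ) : ℝ :=
  (π / 2) * (besselI (-ν) x - besselI ν x) / Real.sin (π * ν)

/-- Digamma function `ψ(x) = Γ'(x)/Γ(x)`. -/
noncomputable def digam (x : ℝ) : ℝ := deriv Real.Gamma x / Real.Gamma x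

/-!
Squaring the power series of `J_ν` (a Cauchy product), the coefficient of `(-(t/2)²)ⁿ` is
`∑_{i+j=n} 1 / (i! j! Γ(ν+i+1) Γ(ν+j+1))`. Written with falling factorials of `ν + n`, this is a
Chu–Vandermonde sum and equals `(2ν+n+1)_n / (n! Γ(ν+n+1)²)`; the duplication
`(2ν+1)_{2n} = 4ⁿ (ν+1/2)_n (ν+1)_n` turns it into `4ⁿ (ν+1/2)_n / (n! Γ(ν+1)² (ν+1)_n (2ν+1)_n)`.
So `J_ν(t)²/t` is a series in the powers `t^(2ν+2n-1)`, which may be integrated termwise over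
`(0, z)`: the integrated terms are those of the ₂F₃ series, whose coefficients lie in `[0, 1]`,
so they converge absolutely.
-/

theorem MeasureTheory.integrable_tsum_of_summable_integral_norm {α : Type*} [MeasurableSpace α]
    {μ : Measure α} {F : ℕ → α → ℝ} (hF_int : ∀ n, Integrable (F n) μ)
    (hF_sum : Summable fun n => ∫ a, ‖F n a‖ ∂μ) :
    Integrable (fun a => ∑' n, F n a) μ := by
  refine ⟨(AEMeasurable.tsum fun n => (hF_int n).aemeasurable).aestronglyMeasurable, ?_⟩
  calc ∫⁻ a, ‖∑' n, F n a‖ₑ ∂μ ≤ ∫⁻ a, ∑' n, ‖F n a‖ₑ ∂μ :=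
        lintegral_mono fun _ => enorm_tsum_le_tsum_enorm
    _ = ∑' n, ENNReal.ofReal (∫ a, ‖F n a‖ ∂μ) := by
        rw [lintegral_tsum fun n => (hF_int n).aemeasurable.enorm]
        simp only [ofReal_integral_norm_eq_lintegral_enorm (hF_int _)]
    _ = ENNReal.ofReal (∑' n, ∫ a, ‖F n a‖ ∂μ) :=
        (ENNReal.ofReal_tsum_of_nonneg (fun _ => integral_nonneg fun _ => norm_nonneg _)
          hF_sum).symm
    _ < ⊤ := ENNReal.ofReal_lt_top

section

open Finset Polynomial Set
open scoped Nat

lemma integral_Ioo_rpow {p z : ℝ} (hp : -1 < p) (hz : 0 ≤ z) :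
    ∫ t in Ioo 0 z, t ^ p = z ^ (p + 1) / (p + 1) := by
  rw [← integral_Ioc_eq_integral_Ioo, ← intervalIntegral.integral_of_le hz, integral_rpow (.inl hp),
    zero_rpow (by linarith), sub_zero]

lemma integrableOn_tsum_mul_rpow_and_integral {a p : ℕ → ℝ} {z : ℝ} (hz : 0 < z)
    (hp : ∀ n, -1 < p n) (hs : Summable fun n => a n * (z ^ (p n + 1) / (p n + 1))) :
    IntegrableOn (fun t => ∑' n, a n * t ^ p n) (Ioo 0 z) ∧
      ∫ t in Ioo 0 z, ∑' n, a n * t ^ p n = ∑' n, a n * (z ^ (p n + 1) / (p n + 1)) := by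
  have hint (n : ℕ) : IntegrableOn (fun t => a n * t ^ p n) (Ioo 0 z) :=
    ((intervalIntegral.integrableOn_Ioo_rpow_iff hz).mpr (hp n)).const_mul (a n)
  have hval (n : ℕ) : ∫ t in Ioo 0 z, a n * t ^ p n = a n * (z ^ (p n + 1) / (p n + 1)) := by
    rw [integral_const_mul, integral_Ioo_rpow (hp n) hz.le]
  have hnorm (n : ℕ) : ∫ t in Ioo 0 z, ‖a n * t ^ p n‖ = |a n * (z ^ (p n + 1) / (p n + 1))| := by
    rw [setIntegral_congr_fun measurableSet_Ioo fun t ht => by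
      rw [norm_mul, Real.norm_of_nonneg (rpow_nonneg ht.1.le _)], integral_const_mul,
      integral_Ioo_rpow (hp n) hz.le, Real.norm_eq_abs, abs_mul,
      abs_of_nonneg (div_nonneg (rpow_nonneg hz.le _) (by linarith [hp n]))]
  have hsum : Summable fun n => ∫ t in Ioo 0 z, ‖a n * t ^ p n‖ := by
    simpa only [hnorm] using hs.abs
  exact ⟨integrable_tsum_of_summable_integral_norm hint hsum, by
    rw [← integral_tsum_of_summable_integral_norm hint hsum, tsum_congr hval]⟩

lemma rpow_add_two_mul_natCast {x : ℝ} (hx : 0 < x) (y : ℝ) (n : ℕ) :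
    x ^ (y + 2 * n) = x ^ y * (x ^ 2) ^ n := by
  rw [rpow_add hx, ← pow_mul, ← rpow_natCast, Nat.cast_mul, Nat.cast_ofNat]

lemma poch_succ (a : ℝ) (n : ℕ) : poch a (n + 1) = poch a n * (a + n) :=
  prod_range_succ _ _

lemma poch_add (a : ℝ) (m n : ℕ) : poch a (m + n) = poch a m * poch (a + m) n := by
  simp only [poch, prod_range_add, Nat.cast_add, add_assoc]

lemma poch_mul_add_natCast (a : ℝ) (n : ℕ) : poch a n * (a + n) = a * poch (a + 1) n := by
  rw [← poch_succ, add_comm n, poch_add]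
  simp [poch]

lemma poch_two_mul_two_mul (a : ℝ) (n : ℕ) :
    poch (2 * a) (2 * n) = 4 ^ n * poch a n * poch (a + 1 / 2) n := by
  induction n with
  | zero => simp [poch]
  | succ n ih =>
    rw [show 2 * (n + 1) = 2 * n + 1 + 1 by ring, poch_succ, poch_succ, ih, poch_succ, poch_succ]
    push_cast
    ring

lemma poch_nonneg {a : ℝ} (ha : 0 ≤ a) (n : ℕ) : 0 ≤ poch a n :=
  prod_nonneg fun i _ => by positivity

lemma poch_pos {a : ℝ} (ha : 0 < a) (n : ℕ) : 0 < poch a n :=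
  prod_pos fun i _ => by positivity

lemma poch_le_poch {a b : ℝ} (ha : 0 ≤ a) (hab : a ≤ b) (n : ℕ) : poch a n ≤ poch b n :=
  prod_le_prod (fun i _ => by positivity) fun i _ => by linarith

lemma one_le_poch {a : ℝ} (ha : 1 ≤ a) (n : ℕ) : 1 ≤ poch a n :=
  one_le_prod fun i _ => by linarith [(i.cast_nonneg : (0 : ℝ) ≤ i)]

lemma poch_eq_eval_ascPochhammer (a : ℝ) (n : ℕ) : poch a n = (ascPochhammer ℝ n).eval a := by
  induction n with
  | zero => simp [poch]
  | succ n ih => rw [poch_succ, ih, ascPochhammer_succ_eval]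

lemma poch_sub_add_one_eq_smeval_descPochhammer (r : ℝ) (n : ℕ) :
    poch (r - n + 1) n = (descPochhammer ℤ n).smeval r := by
  rw [descPochhammer_smeval_eq_ascPochhammer, ascPochhammer_smeval_eq_eval,
    poch_eq_eval_ascPochhammer]

lemma Gamma_add_natCast {x : ℝ} (hx : 0 < x) (n : ℕ) :
    Gamma (x + n) = Gamma x * poch x n := by
  induction n with
  | zero => simp [poch]
  | succ n ih =>
    rw [Nat.cast_succ, ← add_assoc, Gamma_add_one (by positivity), ih, poch_succ]
    ring

lemma genHyp_two_three (a₁ a₂ b₁ b₂ b₃ x : ℝ) :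
    genHyp [a₁, a₂] [b₁, b₂, b₃] x =
      ∑' n, poch a₁ n * poch a₂ n / (poch b₁ n * poch b₂ n * poch b₃ n) * x ^ n / n ! := by
  simp only [genHyp, List.map_cons, List.map_nil, List.prod_cons, List.prod_nil, mul_one, mul_assoc]

lemma summable_genHyp_two_three_terms {a₁ a₂ b₁ b₂ b₃ : ℝ} (ha₁ : 0 ≤ a₁) (h₁ : a₁ ≤ b₁)
    (hb₂ : 1 ≤ b₂) (ha₂ : 0 ≤ a₂) (h₂ : a₂ ≤ b₃) (x : ℝ) :
    Summable fun n =>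
      poch a₁ n * poch a₂ n / (poch b₁ n * poch b₂ n * poch b₃ n) * x ^ n / n ! := by
  refine (Real.summable_pow_div_factorial |x|).of_norm_bounded fun n => ?_
  have h₁n := poch_le_poch ha₁ h₁ n
  have h₂n := poch_le_poch ha₂ h₂ n
  have ha₁n := poch_nonneg ha₁ n
  have ha₂n := poch_nonneg ha₂ n
  have hb₂n := one_le_poch hb₂ n
  have hnum : poch a₁ n * poch a₂ n ≤ poch b₁ n * poch b₃ n :=
    mul_le_mul h₁n h₂n ha₂n (ha₁n.trans h₁n)
  have hden : poch b₁ n * poch b₃ n ≤ poch b₁ n * poch b₂ n * poch b₃ n := by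
    nlinarith [mul_nonneg (ha₁n.trans h₁n) (ha₂n.trans h₂n)]
  have hden_nonneg : 0 ≤ poch b₁ n * poch b₂ n * poch b₃ n :=
    (mul_nonneg ha₁n ha₂n).trans (hnum.trans hden)
  rw [norm_div, norm_mul, norm_pow, Real.norm_eq_abs, Real.norm_eq_abs, Real.norm_natCast,
    abs_of_nonneg (div_nonneg (mul_nonneg ha₁n ha₂n) hden_nonneg)]
  gcongr
  calc _ ≤ 1 * |x| ^ n := by gcongr; exact div_le_one_of_le₀ (hnum.trans hden) hden_nonneg
    _ = |x| ^ n := one_mul _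

noncomputable def besselCoeff (ν : ℝ) (k : ℕ) : ℝ := ((k ! : ℝ) * Gamma (ν + k + 1))⁻¹

noncomputable def besselSqCoeff (ν : ℝ) (n : ℕ) : ℝ :=
  ∑ ij ∈ antidiagonal n, besselCoeff ν ij.1 * besselCoeff ν ij.2

lemma besselJ_eq_tsum (ν x : ℝ) :
    besselJ ν x = (x / 2) ^ ν * ∑' k, besselCoeff ν k * (-(x / 2) ^ 2) ^ k := by
  simp only [besselJ, besselCoeff, neg_pow (_ ^ 2), ← pow_mul, div_eq_mul_inv]
  ring_nf

lemma besselCoeff_mul_besselCoeff {ν : ℝ} (hν : -1 < ν) (i j : ℕ) :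
    besselCoeff ν i * besselCoeff ν j =
      (i + j).choose i * ((descPochhammer ℤ i).smeval (ν + ↑(i + j)) *
        (descPochhammer ℤ j).smeval (ν + ↑(i + j))) /
        ((i + j)! * Gamma (ν + ↑(i + j) + 1) ^ 2) := by
  have hpos (k : ℕ) : 0 < ν + k + 1 := by linarith [(k.cast_nonneg : (0 : ℝ) ≤ k)]
  have hdesc {k l : ℕ} (m : ℕ) (hm : k + l = m) :
      (descPochhammer ℤ k).smeval (ν + m) = poch (ν + l + 1) k := by
    rw [← poch_sub_add_one_eq_smeval_descPochhammer, ← hm]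
    push_cast
    ring_nf
  have hGamma {k l : ℕ} (m : ℕ) (hm : k + l = m) :
      Gamma (ν + m + 1) = Gamma (ν + l + 1) * poch (ν + l + 1) k := by
    rw [← Gamma_add_natCast (hpos l), ← hm]
    push_cast
    ring_nf
  have hfac : ((i + j)! : ℝ) = (i + j).choose i * i ! * j ! := by
    rw [Nat.choose_symm_add]
    exact_mod_cast (Nat.add_choose_mul_factorial_mul_factorial i j).symm
  have : (0 : ℝ) < (i + j).choose i := by exact_mod_cast Nat.choose_pos (Nat.le_add_right i j)
  have := poch_pos (hpos i) j
  have := poch_pos (hpos j) i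
  have := Gamma_pos_of_pos (hpos i)
  have := Gamma_pos_of_pos (hpos j)
  rw [hdesc _ rfl, hdesc _ (add_comm j i), sq, hfac]
  nth_rw 1 [hGamma _ rfl]
  rw [hGamma _ (add_comm j i), besselCoeff, besselCoeff]
  field_simp

lemma besselSqCoeff_eq_poch {ν : ℝ} (hν : -1 < ν) (n : ℕ) :
    besselSqCoeff ν n = poch (2 * ν + n + 1) n / (n ! * Gamma (ν + n + 1) ^ 2) := by
  rw [besselSqCoeff, sum_congr rfl fun ij hij => by
    rw [besselCoeff_mul_besselCoeff hν, mem_antidiagonal.mp hij], ← sum_div,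
    ← Ring.descPochhammer_smeval_add n (Commute.all _ _),
    ← poch_sub_add_one_eq_smeval_descPochhammer]
  ring_nf

lemma besselSqCoeff_eq {ν : ℝ} (hν : -1 / 2 < ν) (n : ℕ) :
    besselSqCoeff ν n =
      4 ^ n * poch (ν + 1 / 2) n /
        (n ! * Gamma (ν + 1) ^ 2 * poch (ν + 1) n * poch (2 * ν + 1) n) := by
  have hdup : poch (2 * ν + 1) n * poch (2 * ν + n + 1) n =
      4 ^ n * poch (ν + 1 / 2) n * poch (ν + 1) n := by
    rw [show 2 * ν + n + 1 = 2 * ν + 1 + n by ring, ← poch_add, ← two_mul,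
      show 2 * ν + 1 = 2 * (ν + 1 / 2) by ring, poch_two_mul_two_mul]
    ring_nf
  have hGamma : Gamma (ν + n + 1) = Gamma (ν + 1) * poch (ν + 1) n := by
    rw [← Gamma_add_natCast (by linarith)]
    ring_nf
  have := poch_pos (show 0 < 2 * ν + 1 by linarith) n
  have := poch_pos (show 0 < ν + 1 by linarith) n
  have := Gamma_pos_of_pos (show 0 < ν + 1 by linarith)
  rw [besselSqCoeff_eq_poch (by linarith), hGamma, div_eq_div_iff (by positivity) (by positivity)]
  linear_combination ((n ! : ℝ) * Gamma (ν + 1) ^ 2 * poch (ν + 1) n) * hdup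

lemma summable_norm_besselCoeff_mul_pow {ν : ℝ} (hν : 0 ≤ ν) (x : ℝ) :
    Summable fun k => ‖besselCoeff ν k * x ^ k‖ := by
  have hΓ := Gamma_pos_of_pos (show 0 < ν + 1 by linarith)
  refine Summable.of_nonneg_of_le (fun _ => norm_nonneg _) (fun k => ?_)
    ((Real.summable_pow_div_factorial |x|).mul_left (Gamma (ν + 1))⁻¹)
  have hpoch := one_le_poch (show 1 ≤ ν + 1 by linarith) k
  have hGamma : Gamma (ν + k + 1) = Gamma (ν + 1) * poch (ν + 1) k := by
    rw [← Gamma_add_natCast (by linarith)]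
    ring_nf
  rw [norm_mul, norm_pow, Real.norm_eq_abs, besselCoeff, hGamma, abs_of_pos (by positivity)]
  calc ((k ! : ℝ) * (Gamma (ν + 1) * poch (ν + 1) k))⁻¹ * |x| ^ k
      ≤ ((k ! : ℝ) * (Gamma (ν + 1) * 1))⁻¹ * |x| ^ k := by gcongr
    _ = (Gamma (ν + 1))⁻¹ * (|x| ^ k / k !) := by ring

lemma besselJ_sq_eq_tsum {ν x : ℝ} (hν : 0 ≤ ν) (hx : 0 ≤ x) :
    besselJ ν x ^ 2 = (x / 2) ^ (2 * ν) * ∑' n, besselSqCoeff ν n * (-(x / 2) ^ 2) ^ n := by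
  have hsum := summable_norm_besselCoeff_mul_pow hν (-(x / 2) ^ 2)
  rw [besselJ_eq_tsum, mul_pow, ← rpow_natCast, ← rpow_mul (by positivity), sq,
    tsum_mul_tsum_eq_tsum_sum_antidiagonal_of_summable_norm hsum hsum]
  congr 1
  · push_cast
    ring_nf
  refine tsum_congr fun n => ?_
  rw [besselSqCoeff, sum_mul]
  refine sum_congr rfl fun ij hij => ?_
  rw [← mem_antidiagonal.mp hij, pow_add]
  ring

lemma besselJ_sq_div_eq_tsum {ν t : ℝ} (hν : 0 ≤ ν) (ht : 0 < t) :
    besselJ ν t ^ 2 / t =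
      ∑' n : ℕ, besselSqCoeff ν n * (-1 / 4) ^ n / 2 ^ (2 * ν) * t ^ (2 * ν + 2 * n - 1) := by
  rw [besselJ_sq_eq_tsum hν ht.le, mul_div_right_comm, ← tsum_mul_left]
  refine tsum_congr fun n => ?_
  rw [div_rpow ht.le zero_le_two, rpow_sub_one ht.ne', rpow_add_two_mul_natCast ht,
    show -(t / 2) ^ 2 = -1 / 4 * t ^ 2 by ring, mul_pow]
  ring

lemma besselSqCoeff_term_eq_genHyp_term {ν z : ℝ} (hν : 0 < ν) (hz : 0 < z) (n : ℕ) :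
    besselSqCoeff ν n * (-1 / 4) ^ n / 2 ^ (2 * ν) *
      (z ^ (2 * ν + 2 * n - 1 + 1) / (2 * ν + 2 * n - 1 + 1)) =
      (z / 2) ^ (2 * ν) / (2 * ν * Gamma (ν + 1) ^ 2) *
        (poch ν n * poch (ν + 1 / 2) n / (poch (ν + 1) n * poch (ν + 1) n * poch (2 * ν + 1) n) *
          (-z ^ 2) ^ n / n !) := by
  have := poch_pos (show 0 < ν + 1 by linarith) n
  have := poch_pos (show 0 < 2 * ν + 1 by linarith) n
  have := poch_pos (show 0 < ν + 1 / 2 by linarith) n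
  have := Gamma_pos_of_pos (show 0 < ν + 1 by linarith)
  have hν_n : 0 < ν + n := by positivity
  rw [besselSqCoeff_eq (by linarith), sub_add_cancel, rpow_add_two_mul_natCast hz,
    div_rpow hz.le zero_le_two, neg_pow (z ^ 2), div_pow,
    eq_div_of_mul_eq hν_n.ne' (poch_mul_add_natCast ν n)]
  field_simp

end

theorem besselJ_sq_div_integral (ν z : ℝ) (hν : 0 < ν) (hz : 0 < z) :
    IntegrableOn (fun t => besselJ ν t ^ 2 / t) (Set.Ioo 0 z) ∧
    ∫ t in Set.Ioo 0 z, besselJ ν t ^ 2 / t =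
      (z / 2) ^ (2 * ν) / (2 * ν * Real.Gamma (ν + 1) ^ 2) *
        genHyp [ν, ν + 1 / 2] [ν + 1, ν + 1, 2 * ν + 1] (-z ^ 2) := by
  have hexpand : Set.EqOn (fun t => besselJ ν t ^ 2 / t)
      (fun t => ∑' n : ℕ, besselSqCoeff ν n * (-1 / 4) ^ n / 2 ^ (2 * ν) * t ^ (2 * ν + 2 * n - 1))
      (Set.Ioo 0 z) := fun t ht => besselJ_sq_div_eq_tsum hν.le ht.1
  have hsum := (summable_genHyp_two_three_terms hν.le (by linarith : ν ≤ ν + 1)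
    (by linarith : (1 : ℝ) ≤ ν + 1) (by linarith : 0 ≤ ν + 1 / 2)
    (by linarith : ν + 1 / 2 ≤ 2 * ν + 1) (-z ^ 2)).mul_left
      ((z / 2) ^ (2 * ν) / (2 * ν * Real.Gamma (ν + 1) ^ 2))
  simp only [← besselSqCoeff_term_eq_genHyp_term hν hz] at hsum
  obtain ⟨hint, hval⟩ := integrableOn_tsum_mul_rpow_and_integral hz
    (fun n => by linarith [(n.cast_nonneg : (0 : ℝ) ≤ n)]) hsum
  refine ⟨hint.congr_fun hexpand.symm measurableSet_Ioo, ?_⟩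
  rw [setIntegral_congr_fun measurableSet_Ioo hexpand, hval, genHyp_two_three, ← tsum_mul_left]
  exact tsum_congr (besselSqCoeff_term_eq_genHyp_term hν hz)
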